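/- arXiv:2502.05511 — 3 statements merged into one kernel-verified Lean document; each statement's English description precedes it below -/
import Mathlib

section
/- Every dominating distribution algorithm is 4-competitive against the optimal online policy: for every dominating distribution algorithm A_dom, every online paging policy B started from the same initial cache, and every horizon T, E[cost(A_dom, T)] ≤ 4 · E[cost(B, T)]. -/
open Finset

/-! ## The Markov paging model

Pages are `Fin n`.  Requests are drawn from a time-homogeneous Markov chain with
row-stochastic transition matrix `M` and a fixed initial distribution `init`.
An online paging policy is given by its (randomized) eviction rule: on a cache miss,
`pol hist cache p` is the probability of evicting page `p`, where `hist` is the list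
of requests seen so far (most recent first, the current — missed — request at the head)
and `cache` is the current cache. -/

/-- A (randomized) online paging policy: given the request history (most recent first,
the current request at the head) and the current cache, the probability of evicting
each page. -/
abbrev Policy (n : ℕ) := List (Fin n) → Finset (Fin n) → Fin n → ℝ

/-- `M` is a row-stochastic transition matrix. -/
def IsStochastic {n : ℕ} (M : Fin n → Fin n → ℝ) : Prop :=
  ∀ i, (∀ j, 0 ≤ M i j) ∧ (∑ j, M i j) = 1

/-- `μ` is a probability distribution on the pages. -/
def IsDist {n : ℕ} (μ : Fin n → ℝ) : Prop :=
  (∀ i, 0 ≤ μ i) ∧ (∑ i, μ i) = 1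

/-- Validity of a policy for cache size `k`: on any (size-`k`) cache, the eviction rule
is a probability distribution supported on the cache. -/
def IsPolicy {n : ℕ} (k : ℕ) (pol : Policy n) : Prop :=
  ∀ (hist : List (Fin n)) (cache : Finset (Fin n)), cache.card = k →
    (∀ p, 0 ≤ pol hist cache p) ∧ (∀ p, p ∉ cache → pol hist cache p = 0) ∧
      (∑ p ∈ cache, pol hist cache p) = 1

/-- Expected number of misses of policy `pol` on the next `T` requests, where the next
request is drawn from `dist`, the history so far is `hist` and the current cache is
`cache`.  On a hit the cache is unchanged; on a miss the policy pays `1`, evicts a page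
`p` with probability `pol (x :: hist) cache p` and brings the requested page in. -/
noncomputable def runAux {n : ℕ} (M : Fin n → Fin n → ℝ) (pol : Policy n) :
    ℕ → (Fin n → ℝ) → List (Fin n) → Finset (Fin n) → ℝ
  | 0, _, _, _ => 0
  | T + 1, dist, hist, cache =>
      ∑ x : Fin n, dist x *
        (if x ∈ cache then runAux M pol T (M x) (x :: hist) cache
         else 1 + ∑ p ∈ cache, pol (x :: hist) cache p *
              runAux M pol T (M x) (x :: hist) (insert x (cache.erase p)))

/-- `E[cost(pol, T)]`: the expected number of cache misses of policy `pol` during the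
first `T` requests of the Markov chain `(M, init)`, starting from cache `cache`. -/
noncomputable def expCost {n : ℕ} (M : Fin n → Fin n → ℝ) (init : Fin n → ℝ)
    (pol : Policy n) (cache : Finset (Fin n)) (T : ℕ) : ℝ :=
  runAux M pol T init [] cache

/-- Probability that, within the next `T` steps of the chain currently at `s`, page `p`
is requested strictly before page `q` (a request to `q` — in particular `p = q` — stops
the process with failure). -/
noncomputable def alphaAux {n : ℕ} (M : Fin n → Fin n → ℝ) (p q : Fin n) :
    ℕ → Fin n → ℝ
  | 0, _ => 0
  | T + 1, s =>
      ∑ x : Fin n, M s x *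
        (if x = q then 0 else if x = p then 1 else alphaAux M p q T x)

/-- `α(p<q|s)`: the probability that, for the chain started at `s`, the first subsequent
request to `p` occurs strictly before the first subsequent request to `q`; in particular
`α(p<p|s) = 0`. -/
noncomputable def alphaProb {n : ℕ} (M : Fin n → Fin n → ℝ) (p q s : Fin n) : ℝ :=
  ⨆ T : ℕ, alphaAux M p q T s

/-- A dominating distribution algorithm: a valid policy which, at every cache miss
(most recent request `s`, current cache `cache`), evicts a page drawn from a dominating
distribution for `cache` given `s`, i.e. one satisfying
`∑ p ∈ cache, μ p * α(p<q|s) ≤ 1/2` for every `q ∈ cache`. -/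
def IsDomPolicy {n : ℕ} (k : ℕ) (M : Fin n → Fin n → ℝ) (pol : Policy n) : Prop :=
  IsPolicy k pol ∧
    ∀ (s : Fin n) (hist : List (Fin n)) (cache : Finset (Fin n)),
      cache.card = k → s ∉ cache →
        ∀ q ∈ cache, (∑ p ∈ cache, pol (s :: hist) cache p * alphaProb M p q s) ≤ 1 / 2

/-!
Potential-function argument of Lund, Phillips and Reingold. Call the pages that `B` holds and `A`
does not the holes, and match them bijectively (`σ`) with the pages that `A` holds and `B` does not.
With `α` read from the current request, `Φ = ∑ₕ (2 + 2 α(h < σ h))` is nonnegative, vanishes on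
equal caches, and, by first-step analysis of `α`, keeps its value in expectation over the next
request when the current one is in both caches. Per request, let `B` move first: a miss of `B` earns
4 and the rematching raises `Φ` by at most 4. Then let `A` move: a miss of `A` at a hole `x` removes
the pair `(x, σ x)` of weight 4, and evicting `p` adds back at most `2 + 2 α(p < σ x)`, which a
dominating distribution keeps at 3 on average; this pays for `A`'s miss.
-/

namespace Set

open Function

variable {α β : Type*} [DecidableEq α] {σ : α → β} {s : Set α} {t : Set β} {a h : α} {b : β}

theorem bijOn_update_insert (hσ : BijOn σ s t) (ha : a ∉ s) (hb : b ∉ t) :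
    BijOn (update σ a b) (insert a s) (insert b t) := by
  have hσ' : BijOn (update σ a b) s t :=
    hσ.congr fun i hi => (update_of_ne (ne_of_mem_of_not_mem hi ha) b σ).symm
  simpa using hσ'.insert (a := a) (by simpa using hb)

theorem bijOn_update_insert_sdiff (hσ : BijOn σ s t) (hh : h ∈ s) (ha : a ∉ s) :
    BijOn (update σ a (σ h)) (insert a (s \ {h})) t := by
  simpa [hσ.mapsTo hh] using
    bijOn_update_insert (hσ.sdiff_singleton hh) (a := a) (b := σ h) (by simp [ha]) (by simp)

theorem bijOn_update_sdiff_insert (hσ : BijOn σ s t) (hh : h ∈ s) (hb : b ∉ t) :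
    BijOn (update σ h b) s (insert b (t \ {σ h})) := by
  simpa [hh] using bijOn_update_insert (hσ.sdiff_singleton hh) (a := h) (by simp) (by simp [hb])

theorem bijOn_update_sdiff_sdiff (hσ : BijOn σ s t) (ha : a ∈ s) (hh : h ∈ s) :
    BijOn (update σ h (σ a)) (s \ {a}) (t \ {σ h}) := by
  obtain rfl | hha := eq_or_ne h a
  · simpa using hσ.sdiff_singleton ha
  have hne : σ a ≠ σ h := fun e => hha (hσ.injOn hh ha e.symm)
  convert bijOn_update_sdiff_insert (hσ.sdiff_singleton ha) (h := h) (b := σ a) ⟨hh, hha⟩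
    (by simp) using 1
  ext i
  by_cases hi : i = σ a
  · subst hi; simp [hσ.mapsTo ha, hne]
  · simp [hi]

end Set

theorem Finset.card_insert_erase_of_notMem {α : Type*} [DecidableEq α] {s : Finset α} {a b : α}
    (ha : a ∉ s) (hb : b ∈ s) : (insert a (s.erase b)).card = s.card := by
  rw [Finset.card_insert_of_notMem fun h => ha (Finset.mem_of_mem_erase h),
    Finset.card_erase_add_one hb]

section Averaging

variable {n k : ℕ} {pol : Policy n} {hist : List (Fin n)} {C : Finset (Fin n)} {f g : Fin n → ℝ}
  {a b c : ℝ}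

theorem IsPolicy.sum_mul_le_add_mul (hpol : IsPolicy k pol) (hC : C.card = k)
    (h : ∀ p ∈ C, f p ≤ c + a * g p) :
    ∑ p ∈ C, pol hist C p * f p ≤ c + a * ∑ p ∈ C, pol hist C p * g p := by
  obtain ⟨hnonneg, -, hsum⟩ := hpol hist C hC
  calc ∑ p ∈ C, pol hist C p * f p ≤ ∑ p ∈ C, pol hist C p * (c + a * g p) :=
        Finset.sum_le_sum fun p hp => mul_le_mul_of_nonneg_left (h p hp) (hnonneg p)
    _ = c + a * ∑ p ∈ C, pol hist C p * g p := by
        simp only [mul_add, Finset.sum_add_distrib, ← Finset.sum_mul, hsum, one_mul, Finset.mul_sum,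
          mul_left_comm (pol hist C _) a]

theorem IsPolicy.le_add_mul_sum_mul (hpol : IsPolicy k pol) (hC : C.card = k)
    (h : ∀ p ∈ C, b ≤ c + a * g p) : b ≤ c + a * ∑ p ∈ C, pol hist C p * g p := by
  have hsum := (hpol hist C hC).2.2
  calc b = ∑ p ∈ C, pol hist C p * b := by rw [← Finset.sum_mul, hsum, one_mul]
    _ ≤ _ := hpol.sum_mul_le_add_mul hC h

end Averaging

namespace Paging

open Function

variable {n k : ℕ} {M : Fin n → Fin n → ℝ}

section Alpha

variable (hM : IsStochastic M) (p q : Fin n)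
include hM

theorem alphaAux_nonneg (T : ℕ) (s : Fin n) : 0 ≤ alphaAux M p q T s := by
  induction T generalizing s with
  | zero => simp [alphaAux]
  | succ T ih =>
    refine Finset.sum_nonneg fun x _ => mul_nonneg ((hM s).1 x) ?_
    split_ifs <;> first | exact ih x | norm_num

theorem alphaAux_le_one (T : ℕ) (s : Fin n) : alphaAux M p q T s ≤ 1 := by
  induction T generalizing s with
  | zero => simp [alphaAux]
  | succ T ih =>
    calc alphaAux M p q (T + 1) s ≤ ∑ x, M s x * 1 := by
          refine Finset.sum_le_sum fun x _ => mul_le_mul_of_nonneg_left ?_ ((hM s).1 x)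
          split_ifs <;> first | exact ih x | norm_num
      _ = 1 := by simp [(hM s).2]

theorem alphaAux_monotone (s : Fin n) : Monotone fun T => alphaAux M p q T s := by
  refine monotone_nat_of_le_succ fun T => ?_
  induction T generalizing s with
  | zero => exact alphaAux_nonneg hM p q 1 s
  | succ T ih =>
    refine Finset.sum_le_sum fun x _ => mul_le_mul_of_nonneg_left ?_ ((hM s).1 x)
    split_ifs <;> first | rfl | exact ih x

theorem bddAbove_range_alphaAux (s : Fin n) : BddAbove (Set.range fun T => alphaAux M p q T s) :=
  ⟨1, Set.forall_mem_range.2 fun T => alphaAux_le_one hM p q T s⟩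

theorem alphaProb_nonneg (s : Fin n) : 0 ≤ alphaProb M p q s :=
  (alphaAux_nonneg hM p q 0 s).trans (le_ciSup (bddAbove_range_alphaAux hM p q s) 0)

theorem alphaProb_le_one (s : Fin n) : alphaProb M p q s ≤ 1 :=
  ciSup_le fun T => alphaAux_le_one hM p q T s

theorem tendsto_alphaAux (s : Fin n) :
    Filter.Tendsto (fun T => alphaAux M p q T s) Filter.atTop (nhds (alphaProb M p q s)) :=
  tendsto_atTop_ciSup (alphaAux_monotone hM p q s) (bddAbove_range_alphaAux hM p q s)

end Alpha

/-- `α(p<q|·)` counting the request `x` that has just been made. -/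
noncomputable def alphaFrom (M : Fin n → Fin n → ℝ) (p q x : Fin n) : ℝ :=
  if x = q then 0 else if x = p then 1 else alphaProb M p q x

section AlphaFrom

variable {p q x : Fin n}

theorem alphaFrom_of_ne (hq : x ≠ q) (hp : x ≠ p) : alphaFrom M p q x = alphaProb M p q x := by
  simp [alphaFrom, hq, hp]

theorem alphaFrom_self_right : alphaFrom M p x x = 0 := by simp [alphaFrom]

theorem alphaFrom_self_left (hq : x ≠ q) : alphaFrom M x q x = 1 := by simp [alphaFrom, hq]

variable (hM : IsStochastic M)
include hM

theorem alphaFrom_nonneg : 0 ≤ alphaFrom M p q x := by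
  unfold alphaFrom; split_ifs <;> first | exact alphaProb_nonneg hM p q x | norm_num

theorem alphaFrom_le_one : alphaFrom M p q x ≤ 1 := by
  unfold alphaFrom; split_ifs <;> first | exact alphaProb_le_one hM p q x | norm_num

theorem alphaProb_eq_sum (s : Fin n) : alphaProb M p q s = ∑ x, M s x * alphaFrom M p q x := by
  refine tendsto_nhds_unique ((tendsto_alphaAux hM p q s).comp (Filter.tendsto_add_atTop_nat 1))
    (tendsto_finsetSum _ fun x _ => Filter.Tendsto.const_mul _ ?_)
  unfold alphaFrom
  split_ifs
  · exact tendsto_const_nhds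
  · exact tendsto_const_nhds
  · exact tendsto_alphaAux hM p q x

end AlphaFrom

noncomputable def pairWeight (M : Fin n → Fin n → ℝ) (p q x : Fin n) : ℝ :=
  2 + 2 * alphaFrom M p q x

noncomputable def potential (M : Fin n → Fin n → ℝ) (σ : Fin n → Fin n) (H : Finset (Fin n))
    (x : Fin n) : ℝ :=
  ∑ h ∈ H, pairWeight M h (σ h) x

section Weight

variable {p q x : Fin n}

theorem pairWeight_self_right : pairWeight M p x x = 2 := by
  simp [pairWeight, alphaFrom_self_right]

theorem pairWeight_self_left (hq : x ≠ q) : pairWeight M x q x = 4 := by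
  norm_num [pairWeight, alphaFrom_self_left hq]

theorem pairWeight_of_ne (hq : x ≠ q) (hp : x ≠ p) :
    pairWeight M p q x = 2 + 2 * alphaProb M p q x := by
  rw [pairWeight, alphaFrom_of_ne hq hp]

variable (hM : IsStochastic M)
include hM

theorem two_le_pairWeight : 2 ≤ pairWeight M p q x := by
  have := alphaFrom_nonneg (p := p) (q := q) (x := x) hM
  unfold pairWeight; linarith

theorem pairWeight_le_four : pairWeight M p q x ≤ 4 := by
  have := alphaFrom_le_one (p := p) (q := q) (x := x) hM
  unfold pairWeight; linarith

theorem sum_mul_pairWeight : ∑ y, M x y * pairWeight M p q y = 2 + 2 * alphaProb M p q x := by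
  simp only [pairWeight, mul_add, mul_left_comm _ (2 : ℝ), Finset.sum_add_distrib,
    ← Finset.mul_sum, ← Finset.sum_mul, (hM x).2, ← alphaProb_eq_sum hM]
  ring

end Weight

section Potential

variable {σ : Fin n → Fin n} {H : Finset (Fin n)} {a h b x : Fin n}

theorem potential_nonneg (hM : IsStochastic M) : 0 ≤ potential M σ H x :=
  Finset.sum_nonneg fun _ _ => zero_le_two.trans (two_le_pairWeight hM)

theorem potential_update_of_notMem (ha : a ∉ H) :
    potential M (update σ a b) H x = potential M σ H x :=
  Finset.sum_congr rfl fun i hi => by rw [update_of_ne (ne_of_mem_of_not_mem hi ha)]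

theorem potential_update_insert (ha : a ∉ H) :
    potential M (update σ a b) (insert a H) x = potential M σ H x + pairWeight M a b x := by
  rw [potential, Finset.sum_insert ha, ← potential, potential_update_of_notMem ha,
    update_self, add_comm]

theorem potential_erase (hh : h ∈ H) :
    potential M σ (H.erase h) x = potential M σ H x - pairWeight M h (σ h) x :=
  Finset.sum_erase_eq_sub hh

theorem potential_update (hh : h ∈ H) :
    potential M (update σ h b) H x = potential M σ H x - pairWeight M h (σ h) x +
      pairWeight M h b x := by
  conv_lhs => rw [← Finset.insert_erase hh]
  rw [potential_update_insert (Finset.notMem_erase h H), potential_erase hh]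

theorem potential_update_insert_erase (hh : h ∈ H) (ha : a ∉ H) :
    potential M (update σ a (σ h)) (insert a (H.erase h)) x =
      potential M σ H x - pairWeight M h (σ h) x + pairWeight M a (σ h) x := by
  rw [potential_update_insert fun h' => ha (Finset.mem_of_mem_erase h'), potential_erase hh]

theorem potential_update_erase_le (hM : IsStochastic M) (ha : a ∈ H) (hh : h ∈ H) :
    potential M (update σ h (σ a)) (H.erase a) x ≤
      potential M σ H x - pairWeight M a (σ a) x - pairWeight M h (σ h) x + 4 := by
  obtain rfl | hha := eq_or_ne h a
  · rw [potential_update_of_notMem (Finset.notMem_erase h H), potential_erase ha]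
    linarith [pairWeight_le_four (p := h) (q := σ h) (x := x) hM]
  · rw [potential_update (Finset.mem_erase.2 ⟨hha, hh⟩), potential_erase ha]
    linarith [pairWeight_le_four (p := h) (q := σ a) (x := x) hM]

theorem sum_mul_potential (hM : IsStochastic M) (hx : ∀ h ∈ H, h ≠ x ∧ σ h ≠ x) :
    ∑ y, M x y * potential M σ H y = potential M σ H x := by
  simp only [potential, Finset.mul_sum]
  rw [Finset.sum_comm]
  refine Finset.sum_congr rfl fun h hh => ?_
  rw [sum_mul_pairWeight hM, pairWeight_of_ne (hx h hh).2.symm (hx h hh).1.symm]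

end Potential

def IsMatching (σ : Fin n → Fin n) (CA CB : Finset (Fin n)) : Prop :=
  Set.BijOn σ ↑(CB \ CA) ↑(CA \ CB)

section Matching

variable {σ : Fin n → Fin n} {CA CB : Finset (Fin n)} {x p q : Fin n}

theorem IsMatching.exists_insert_erase_right (hM : IsStochastic M) (hσ : IsMatching σ CA CB)
    (hx : x ∉ CB) (hq : q ∈ CB) :
    ∃ σ', IsMatching σ' CA (insert x (CB.erase q)) ∧
      potential M σ' (insert x (CB.erase q) \ CA) x ≤ potential M σ (CB \ CA) x + 4 := by
  unfold IsMatching at hσ ⊢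
  by_cases hxA : x ∈ CA
  · obtain ⟨h₀, hh₀, hσh₀⟩ : x ∈ σ '' ↑(CB \ CA) := hσ.surjOn (by simp [hxA, hx])
    have hw₀ : pairWeight M h₀ (σ h₀) x = 2 := by rw [hσh₀, pairWeight_self_right]
    by_cases hqA : q ∈ CA
    · have hH : insert x (CB.erase q) \ CA = CB \ CA := by grind
      have hK : CA \ insert x (CB.erase q) = insert q ((CA \ CB).erase x) := by grind
      refine ⟨update σ h₀ q, ?_, ?_⟩
      · rw [hH, hK, Finset.coe_insert, Finset.coe_erase, ← hσh₀]
        exact Set.bijOn_update_sdiff_insert hσ hh₀ (by simp [hq])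
      · rw [hH, potential_update hh₀, hw₀]
        linarith [pairWeight_le_four (p := h₀) (q := q) (x := x) hM]
    · have hqH : q ∈ CB \ CA := Finset.mem_sdiff.2 ⟨hq, hqA⟩
      have hH : insert x (CB.erase q) \ CA = (CB \ CA).erase q := by grind
      have hK : CA \ insert x (CB.erase q) = (CA \ CB).erase x := by grind
      refine ⟨update σ h₀ (σ q), ?_, ?_⟩
      · rw [hH, hK, Finset.coe_erase, Finset.coe_erase, ← hσh₀]
        exact Set.bijOn_update_sdiff_sdiff hσ hqH hh₀
      · rw [hH]
        linarith [potential_update_erase_le (σ := σ) (x := x) hM hqH (Finset.mem_coe.1 hh₀),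
          two_le_pairWeight (p := q) (q := σ q) (x := x) hM]
  · by_cases hqA : q ∈ CA
    · have hH : insert x (CB.erase q) \ CA = insert x (CB \ CA) := by grind
      have hK : CA \ insert x (CB.erase q) = insert q (CA \ CB) := by grind
      refine ⟨update σ x q, ?_, ?_⟩
      · rw [hH, hK, Finset.coe_insert, Finset.coe_insert]
        exact Set.bijOn_update_insert hσ (by simp [hx]) (by simp [hq])
      · rw [hH, potential_update_insert (by simp [hx])]
        linarith [pairWeight_le_four (p := x) (q := q) (x := x) hM]
    · have hqH : q ∈ CB \ CA := Finset.mem_sdiff.2 ⟨hq, hqA⟩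
      have hH : insert x (CB.erase q) \ CA = insert x ((CB \ CA).erase q) := by grind
      have hK : CA \ insert x (CB.erase q) = CA \ CB := by grind
      refine ⟨update σ x (σ q), ?_, ?_⟩
      · rw [hH, hK, Finset.coe_insert, Finset.coe_erase]
        exact Set.bijOn_update_insert_sdiff hσ hqH (by simp [hx])
      · rw [hH, potential_update_insert_erase hqH (by simp [hx])]
        linarith [pairWeight_le_four (p := x) (q := σ q) (x := x) hM,
          two_le_pairWeight (p := q) (q := σ q) (x := x) hM]

theorem IsMatching.exists_insert_erase_left (hM : IsStochastic M) (hσ : IsMatching σ CA CB)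
    (hxA : x ∉ CA) (hxB : x ∈ CB) (hp : p ∈ CA) :
    ∃ σ', IsMatching σ' (insert x (CA.erase p)) CB ∧
      potential M σ' (CB \ insert x (CA.erase p)) x ≤
        potential M σ (CB \ CA) x - 2 + 2 * alphaProb M p (σ x) x := by
  unfold IsMatching at hσ ⊢
  have hxH : x ∈ CB \ CA := Finset.mem_sdiff.2 ⟨hxB, hxA⟩
  have hσx : σ x ∈ CA \ CB := hσ.mapsTo (Finset.mem_coe.2 hxH)
  have hσxx : x ≠ σ x := fun e => hxA (e ▸ (Finset.mem_sdiff.1 hσx).1)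
  have hwx : pairWeight M x (σ x) x = 4 := pairWeight_self_left hσxx
  by_cases hpB : p ∈ CB
  · have hH : CB \ insert x (CA.erase p) = insert p ((CB \ CA).erase x) := by grind
    have hK : insert x (CA.erase p) \ CB = CA \ CB := by grind
    refine ⟨update σ p (σ x), ?_, ?_⟩
    · rw [hH, hK, Finset.coe_insert, Finset.coe_erase]
      exact Set.bijOn_update_insert_sdiff hσ hxH (by simp [hp])
    · rw [hH, potential_update_insert_erase hxH (by simp [hp]), hwx,
        pairWeight_of_ne hσxx fun e => hxA (e ▸ hp)]
      linarith
  · obtain ⟨h, hh, hσh⟩ : p ∈ σ '' ↑(CB \ CA) := hσ.surjOn (by simp [hp, hpB])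
    have hH : CB \ insert x (CA.erase p) = (CB \ CA).erase x := by grind
    have hK : insert x (CA.erase p) \ CB = (CA \ CB).erase p := by grind
    refine ⟨update σ h (σ x), ?_, ?_⟩
    · rw [hH, hK, Finset.coe_erase, Finset.coe_erase, ← hσh]
      exact Set.bijOn_update_sdiff_sdiff hσ hxH hh
    · rw [hH]
      linarith [potential_update_erase_le (σ := σ) (x := x) hM hxH (Finset.mem_coe.1 hh),
        two_le_pairWeight (p := h) (q := σ h) (x := x) hM, alphaProb_nonneg hM p (σ x) x]

end Matching

/-- Expected cost of `pol` given that the next request is `x`. -/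
noncomputable def condCost (M : Fin n → Fin n → ℝ) (pol : Policy n) (T : ℕ) (x : Fin n)
    (hist : List (Fin n)) (C : Finset (Fin n)) : ℝ :=
  if x ∈ C then runAux M pol T (M x) (x :: hist) C
  else 1 + ∑ p ∈ C, pol (x :: hist) C p * runAux M pol T (M x) (x :: hist) (insert x (C.erase p))

section CondCost

variable {pol : Policy n} {T : ℕ} {dist : Fin n → ℝ} {x : Fin n} {hist : List (Fin n)}
  {C : Finset (Fin n)}

theorem runAux_succ :
    runAux M pol (T + 1) dist hist C = ∑ x, dist x * condCost M pol T x hist C := rfl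

theorem condCost_of_mem (hx : x ∈ C) :
    condCost M pol T x hist C = runAux M pol T (M x) (x :: hist) C := if_pos hx

theorem condCost_of_notMem (hx : x ∉ C) :
    condCost M pol T x hist C =
      1 + ∑ p ∈ C, pol (x :: hist) C p * condCost M pol T x hist (insert x (C.erase p)) := by
  rw [condCost, if_neg hx]
  simp only [condCost_of_mem (Finset.mem_insert_self x _)]

end CondCost

def AmortizedBound (M : Fin n → Fin n → ℝ) (k : ℕ) (A B : Policy n) (T : ℕ) : Prop :=
  ∀ dist : Fin n → ℝ, (∀ x, 0 ≤ dist x) →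
    ∀ (CA CB : Finset (Fin n)) (σ : Fin n → Fin n), CA.card = k → CB.card = k →
      IsMatching σ CA CB → ∀ histA histB : List (Fin n),
        runAux M A T dist histA CA ≤
          4 * runAux M B T dist histB CB + ∑ x, dist x * potential M σ (CB \ CA) x

namespace AmortizedBound

variable {A B : Policy n} {T : ℕ} {x : Fin n} {histA histB : List (Fin n)}
  {CA CB : Finset (Fin n)} {σ : Fin n → Fin n}

theorem condCost_le_of_mem_of_mem (ih : AmortizedBound M k A B T) (hM : IsStochastic M)
    (hCA : CA.card = k) (hCB : CB.card = k) (hσ : IsMatching σ CA CB) (hxA : x ∈ CA)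
    (hxB : x ∈ CB) :
    condCost M A T x histA CA ≤ 4 * condCost M B T x histB CB + potential M σ (CB \ CA) x := by
  have hx : ∀ h ∈ CB \ CA, h ≠ x ∧ σ h ≠ x := fun h hh =>
    ⟨ne_of_mem_of_not_mem hxA (Finset.mem_sdiff.1 hh).2 |>.symm,
      ne_of_mem_of_not_mem hxB (Finset.mem_sdiff.1 (hσ.mapsTo hh)).2 |>.symm⟩
  rw [condCost_of_mem hxA, condCost_of_mem hxB, ← sum_mul_potential hM hx]
  exact ih (M x) (hM x).1 CA CB σ hCA hCB hσ _ _

theorem condCost_le_of_mem (ih : AmortizedBound M k A B T) (hM : IsStochastic M)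
    (hA : IsDomPolicy k M A) (hCA : CA.card = k) (hCB : CB.card = k) (hσ : IsMatching σ CA CB)
    (hxB : x ∈ CB) :
    condCost M A T x histA CA ≤ 4 * condCost M B T x histB CB + potential M σ (CB \ CA) x := by
  by_cases hxA : x ∈ CA
  · exact ih.condCost_le_of_mem_of_mem hM hCA hCB hσ hxA hxB
  have hevict : ∀ p ∈ CA, condCost M A T x histA (insert x (CA.erase p)) ≤
      (4 * condCost M B T x histB CB + potential M σ (CB \ CA) x - 2) +
        2 * alphaProb M p (σ x) x := by
    intro p hp
    obtain ⟨σ', hσ', hpot⟩ := hσ.exists_insert_erase_left hM hxA hxB hp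
    have := ih.condCost_le_of_mem_of_mem (histA := histA) (histB := histB) hM
      ((Finset.card_insert_erase_of_notMem hxA hp).trans hCA) hCB hσ'
      (Finset.mem_insert_self x _) hxB
    linarith
  have hσx : σ x ∈ CA := (Finset.mem_sdiff.1 (hσ.mapsTo (by simp [hxA, hxB]))).1
  rw [condCost_of_notMem hxA]
  linarith [hA.1.sum_mul_le_add_mul (hist := x :: histA) hCA hevict,
    hA.2 x histA CA hCA hxA (σ x) hσx]

theorem condCost_le (ih : AmortizedBound M k A B T) (hM : IsStochastic M)
    (hA : IsDomPolicy k M A) (hB : IsPolicy k B) (hCA : CA.card = k) (hCB : CB.card = k)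
    (hσ : IsMatching σ CA CB) (x : Fin n) :
    condCost M A T x histA CA ≤ 4 * condCost M B T x histB CB + potential M σ (CB \ CA) x := by
  by_cases hxB : x ∈ CB
  · exact ih.condCost_le_of_mem hM hA hCA hCB hσ hxB
  have hevict : ∀ q ∈ CB, condCost M A T x histA CA ≤
      (potential M σ (CB \ CA) x + 4) + 4 * condCost M B T x histB (insert x (CB.erase q)) := by
    intro q hq
    obtain ⟨σ', hσ', hpot⟩ := hσ.exists_insert_erase_right hM hxB hq
    have := ih.condCost_le_of_mem (histA := histA) (histB := histB) hM hA hCA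
      ((Finset.card_insert_erase_of_notMem hxB hq).trans hCB) hσ' (Finset.mem_insert_self x _)
    linarith
  rw [condCost_of_notMem hxB]
  linarith [hB.le_add_mul_sum_mul (hist := x :: histB) hCB hevict]

end AmortizedBound

theorem amortizedBound (hM : IsStochastic M) {A B : Policy n} (hA : IsDomPolicy k M A)
    (hB : IsPolicy k B) (T : ℕ) : AmortizedBound M k A B T := by
  induction T with
  | zero =>
    intro dist hdist CA CB σ _ _ _ _ _
    simpa [runAux] using Finset.sum_nonneg fun x _ => mul_nonneg (hdist x) (potential_nonneg hM)
  | succ T ih =>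
    intro dist hdist CA CB σ hCA hCB hσ histA histB
    simp only [runAux_succ, Finset.mul_sum, ← Finset.sum_add_distrib]
    refine Finset.sum_le_sum fun x _ => ?_
    calc dist x * condCost M A T x histA CA
        ≤ dist x * (4 * condCost M B T x histB CB + potential M σ (CB \ CA) x) :=
          mul_le_mul_of_nonneg_left (ih.condCost_le hM hA hB hCA hCB hσ x) (hdist x)
      _ = _ := by ring

end Paging

theorem dominating_distribution_four_competitive_general {n k : ℕ}
    (M : Fin n → Fin n → ℝ) (hM : IsStochastic M)
    (init : Fin n → ℝ) (hinit : IsDist init)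
    (C₀ : Finset (Fin n)) (hC₀ : C₀.card = k)
    (A : Policy n) (hA : IsDomPolicy k M A)
    (B : Policy n) (hB : IsPolicy k B) (T : ℕ) :
    expCost M init A C₀ T ≤ 4 * expCost M init B C₀ T := by
  have hσ : Paging.IsMatching id C₀ C₀ := by simp [Paging.IsMatching]
  simpa [expCost, Paging.potential] using
    Paging.amortizedBound hM hA hB T init hinit.1 C₀ C₀ id hC₀ hC₀ hσ [] []

/-- **Theorem (Lund–Phillips–Reingold: 4-competitiveness of the dominating distribution
algorithm).**  Every dominating distribution algorithm `A` is 4-competitive against the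
optimal online policy: for every online paging policy `B` started from the same initial
cache and every horizon `T`, `E[cost(A, T)] ≤ 4 · E[cost(B, T)]`. -/
theorem dominating_distribution_four_competitive {n k : ℕ} (hkn : k < n)
    (M : Fin n → Fin n → ℝ) (hM : IsStochastic M)
    (init : Fin n → ℝ) (hinit : IsDist init)
    (C₀ : Finset (Fin n)) (hC₀ : C₀.card = k)
    (A : Policy n) (hA : IsDomPolicy k M A)
    (B : Policy n) (hB : IsPolicy k B) (T : ℕ) :
    expCost M init A C₀ T ≤ 4 * expCost M init B C₀ T :=
  dominating_distribution_four_competitive_general M hM init hinit C₀ hC₀ A hA B hB T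
end

section
/- Let C be a nonempty finite set and let α : C × C → ℝ satisfy 0 ≤ α(p,q) ≤ 1 for all p, q ∈ C, α(p,p) = 0 for all p ∈ C, and α(p,q) + α(q,p) = 1 whenever p ≠ q. Then there exists a probability distribution μ on C (i.e., μ(p) ≥ 0 for all p and Σ_{p∈C} μ(p) = 1) such that for every q ∈ C, Σ_{p∈C} μ(p)·α(p,q) ≤ 1/2. -/
/-!
Subtracting `1/2` from `α` gives a payoff matrix `B` with `B p q + B q p ≤ 0`. By the minimax
theorem the bilinear game `x ⬝ᵥ B *ᵥ y` on the simplex has a saddle point `(ν, σ)`, so the payoff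
of `ν` against any pure strategy is at most `σ ⬝ᵥ B *ᵥ σ`, and this quadratic form is nonpositive
because its symmetrization `B + Bᵀ` is entrywise nonpositive.
-/

open Finset

namespace Matrix

variable {ι : Type*} [Fintype ι]

theorem vecMul_dotProduct_self_nonpos {B : Matrix ι ι ℝ} (hB : ∀ p q, B p q + B q p ≤ 0)
    {x : ι → ℝ} (hx : 0 ≤ x) : x ᵥ* B ⬝ᵥ x ≤ 0 := by
  have hsymm : 2 * (x ᵥ* B ⬝ᵥ x) = ∑ p, ∑ q, x p * x q * (B p q + B q p) := by
    simp only [dotProduct, vecMul, sum_mul, mul_add, sum_add_distrib, two_mul]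
    congr 1
    · rw [sum_comm]
      exact sum_congr rfl fun _ _ => sum_congr rfl fun _ _ => by ring
    · exact sum_congr rfl fun _ _ => sum_congr rfl fun _ _ => by ring
  have : ∑ p, ∑ q, x p * x q * (B p q + B q p) ≤ 0 :=
    sum_nonpos fun p _ => sum_nonpos fun q _ =>
      mul_nonpos_of_nonneg_of_nonpos (mul_nonneg (hx p) (hx q)) (hB p q)
  linarith

theorem exists_mem_stdSimplex_vecMul_nonpos [Nonempty ι] (B : Matrix ι ι ℝ)
    (hB : ∀ p q, B p q + B q p ≤ 0) : ∃ ν ∈ stdSimplex ℝ ι, ∀ q, (ν ᵥ* B) q ≤ 0 := by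
  classical
  let f : (ι → ℝ) →ₗ[ℝ] (ι → ℝ) →ₗ[ℝ] ℝ := toLinearMap₂' ℝ B
  have hconv := convex_stdSimplex ℝ ι
  obtain ⟨ν, hν, σ, hσ, hsaddle⟩ := Sion.exists_isSaddlePointOn (f := fun x y => f x y)
    ⟨_, single_mem_stdSimplex ℝ (Classical.arbitrary ι)⟩ hconv (isCompact_stdSimplex ℝ ι)
    (fun y _ => (f.flip y).continuous_of_finiteDimensional.continuousOn.lowerSemicontinuousOn)
    (fun y _ => ((f.flip y).convexOn hconv).quasiconvexOn)
    hconv ⟨_, single_mem_stdSimplex ℝ (Classical.arbitrary ι)⟩ (isCompact_stdSimplex ℝ ι)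
    (fun x _ => (f x).continuous_of_finiteDimensional.continuousOn.upperSemicontinuousOn)
    (fun x _ => ((f x).concaveOn hconv).quasiconcaveOn)
  refine ⟨ν, hν, fun q => ?_⟩
  calc (ν ᵥ* B) q = f ν (Pi.single q 1) := by
        rw [toLinearMap₂'_apply', dotProduct_mulVec, dotProduct_single_one]
    _ ≤ f σ σ := hsaddle σ hσ _ (single_mem_stdSimplex ℝ q)
    _ ≤ 0 := by
        rw [toLinearMap₂'_apply', dotProduct_mulVec]
        exact vecMul_dotProduct_self_nonpos hB hσ.1

end Matrix

theorem Finset.exists_prob_sum_mul_nonpos {V : Type*} (C : Finset V) (hC : C.Nonempty)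
    (B : V → V → ℝ) (hB : ∀ p ∈ C, ∀ q ∈ C, B p q + B q p ≤ 0) :
    ∃ μ : V → ℝ, (∀ p, 0 ≤ μ p) ∧ (∀ p ∉ C, μ p = 0) ∧ ∑ p ∈ C, μ p = 1 ∧
      ∀ q ∈ C, ∑ p ∈ C, μ p * B p q ≤ 0 := by
  classical
  have : Nonempty C := hC.to_subtype
  obtain ⟨ν, hν, hνB⟩ :=
    Matrix.exists_mem_stdSimplex_vecMul_nonpos (fun p q : C => B p q) fun p q => hB p p.2 q q.2
  let μ : V → ℝ := fun v => if h : v ∈ C then ν ⟨v, h⟩ else 0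
  have hsum : ∀ g : V → ℝ, ∑ p ∈ C, μ p * g p = ∑ p : C, ν p * g p := fun g => by
    rw [← sum_coe_sort C]
    exact sum_congr rfl fun p _ => by simp [μ, p.2]
  refine ⟨μ, fun v => ?_, fun v hv => dif_neg hv, ?_, fun q hq => ?_⟩
  · by_cases hv : v ∈ C
    · simpa [μ, hv] using hν.1 ⟨v, hv⟩
    · simp [μ, hv]
  · simpa using (hsum fun _ => 1).trans (by simpa using hν.2)
  · rw [hsum]
    simpa [Matrix.vecMul, dotProduct, mul_comm] using hνB ⟨q, hq⟩

theorem dominating_distribution_exists_general {V : Type*}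
    (C : Finset V) (hC : C.Nonempty) (α : V → V → ℝ)
    (hdiag : ∀ p ∈ C, α p p = 0)
    (hanti : ∀ p ∈ C, ∀ q ∈ C, p ≠ q → α p q + α q p = 1) :
    ∃ μ : V → ℝ, (∀ p, 0 ≤ μ p) ∧ (∀ p ∉ C, μ p = 0) ∧ (∑ p ∈ C, μ p) = 1 ∧
      ∀ q ∈ C, (∑ p ∈ C, μ p * α p q) ≤ 1 / 2 := by
  have hskew : ∀ p ∈ C, ∀ q ∈ C, (α p q - 1 / 2) + (α q p - 1 / 2) ≤ 0 := by
    intro p hp q hq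
    rcases eq_or_ne p q with rfl | hpq
    · linarith [hdiag p hp]
    · linarith [hanti p hp q hq hpq]
  obtain ⟨μ, hμ0, hμC, hμ1, hμα⟩ := C.exists_prob_sum_mul_nonpos hC _ hskew
  refine ⟨μ, hμ0, hμC, hμ1, fun q hq => ?_⟩
  have := hμα q hq
  simp only [mul_sub, sum_sub_distrib, ← sum_mul, hμ1] at this
  linarith

/-- **Theorem (existence of a dominating distribution).**
Let `C` be a nonempty finite set and let `α : C × C → ℝ` satisfy `0 ≤ α(p,q) ≤ 1` for
all `p, q ∈ C`, `α(p,p) = 0` for all `p ∈ C`, and `α(p,q) + α(q,p) = 1` whenever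
`p ≠ q`.  Then there exists a probability distribution `μ` on `C` such that for every
`q ∈ C`, `∑_{p ∈ C} μ(p)·α(p,q) ≤ 1/2`. -/
theorem dominating_distribution_exists {V : Type*} [DecidableEq V]
    (C : Finset V) (hC : C.Nonempty) (α : V → V → ℝ)
    (h01 : ∀ p ∈ C, ∀ q ∈ C, 0 ≤ α p q ∧ α p q ≤ 1)
    (hdiag : ∀ p ∈ C, α p p = 0)
    (hanti : ∀ p ∈ C, ∀ q ∈ C, p ≠ q → α p q + α q p = 1) :
    ∃ μ : V → ℝ, (∀ p, 0 ≤ μ p) ∧ (∀ p ∉ C, μ p = 0) ∧ (∑ p ∈ C, μ p) = 1 ∧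
      ∀ q ∈ C, (∑ p ∈ C, μ p * α p q) ≤ 1 / 2 :=
  dominating_distribution_exists_general C hC α hdiag hanti
end

section
/- Under the updated charging scheme, for every request sequence, every pair of runs of A and OPT, and every horizon T: cost(OPT, T) ≥ Σ_{t ≤ T} β(t) + ℐ − 𝒟 − 𝒪 + 𝒰, where β(t) = 1 if A suffers a miss and evicts a page p at time t such that the page c(p) assigned to p at this eviction is requested, strictly after time t, no later than the first request to p after time t (and β(t) = 0 otherwise), cost(OPT, T) is the number of cache misses of OPT during the first T requests, and ℐ, 𝒟, 𝒪, 𝒰 are evaluated at horizon T. -/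
open Finset
open scoped Classical

/-! ## The updated charging scheme

We fix an infinite request sequence and fixed runs of an online paging policy `A`
and of an online policy `OPT` on it, both from the same initial cache of size `k`.
Each page `p` carries a value `chg p ∈ Option Page` (`none` = no charge given);
`p` gives a charge to the page `chg p` when `chg p ≠ none`, and that page bears it.
When a page `s` is requested at time `t` the charges are updated in order:
(1a) `c(s) := none`; (1b) every `p` with `c(p) = s` gets `c(p) := none`;
(2) if `A` misses and evicts `p`: if `p` is not in `OPT`'s cache just after the
request then `c(p) := p`, otherwise `c(p) := q` for a page `q` of `A`'s cache just
before the request, outside `OPT`'s cache just after it, bearing no charge from any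
page of `OPT⁺ \ A⁻`;
(3) if `OPT` evicts `p` then `c(p) := p`. -/

/-- One step of a paging run: on a hit nothing happens, on a miss some cached page `p`
is evicted and the requested page brought in. -/
def CacheStep {Page : Type} [DecidableEq Page] (s : Page) (C C' : Finset Page)
    (ev : Option Page) : Prop :=
  (s ∈ C ∧ ev = none ∧ C' = C) ∨
    (s ∉ C ∧ ∃ p ∈ C, ev = some p ∧ C' = insert s (C.erase p))

/-- Steps (1a) and (1b): when `s` is requested, clear the charge `s` gives and every
charge borne by `s`. -/
def clearStep {Page : Type} [DecidableEq Page] (s : Page) (c : Page → Option Page) :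
    Page → Option Page :=
  fun x => if x = s ∨ c x = some s then none else c x

/-- Step (2): if `A` evicted `p` (cache `CA` just before the request, `OPT`'s cache
`CO` just after it), assign `p`'s charge. -/
def AStep {Page : Type} [DecidableEq Page] (CA CO : Finset Page) (ev : Option Page)
    (c c' : Page → Option Page) : Prop :=
  match ev with
  | none => c' = c
  | some p =>
      (p ∉ CO ∧ c' = Function.update c p (some p)) ∨
        (p ∈ CO ∧ ∃ q ∈ CA, q ∉ CO ∧
          (∀ x ∈ CO, x ∉ CA → c x ≠ some q) ∧
          c' = Function.update c p (some q))

/-- Step (3): if `OPT` evicted `p`, set `c(p) := p`. -/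
def optStep {Page : Type} [DecidableEq Page] (ev : Option Page)
    (c : Page → Option Page) : Page → Option Page :=
  match ev with
  | none => c
  | some p => Function.update c p (some p)

/-- A joint run of the request sequence, of the two paging algorithms `A` and `OPT`
(started from the same initial cache of size `k`), and of the updated charging scheme.
`req t` is the page requested at time `t`; `cacheA t`, `cacheOpt t` and `chg t` are the
caches and the charge function just before that request; `evA t`, `evOpt t` are the
pages evicted at time `t` (if any). -/
structure ChargingRun (Page : Type) [DecidableEq Page] where
  k : ℕ
  req : ℕ → Page
  cacheA : ℕ → Finset Page
  cacheOpt : ℕ → Finset Page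
  evA : ℕ → Option Page
  evOpt : ℕ → Option Page
  chg : ℕ → Page → Option Page
  init_card : (cacheA 0).card = k
  init_eq : cacheOpt 0 = cacheA 0
  chg_init : ∀ p, chg 0 p = none
  stepA : ∀ t, CacheStep (req t) (cacheA t) (cacheA (t + 1)) (evA t)
  stepOpt : ∀ t, CacheStep (req t) (cacheOpt t) (cacheOpt (t + 1)) (evOpt t)
  chg_step : ∀ t, ∃ c₂, AStep (cacheA t) (cacheOpt (t + 1)) (evA t)
      (clearStep (req t) (chg t)) c₂ ∧ chg (t + 1) = optStep (evOpt t) c₂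

variable {Page : Type} [DecidableEq Page] [Fintype Page]

/-- The set of pages giving a charge to `x` just before the request at time `t`. -/
def bearers (R : ChargingRun Page) (t : ℕ) (x : Page) : Finset Page :=
  univ.filter fun p => R.chg t p = some x

/-- `ℐ` after `T` requests: the number of pages not in the initial cache requested at
some time `< T`. -/
def Icount (R : ChargingRun Page) (T : ℕ) : ℕ :=
  (((range T).image R.req) \ R.cacheA 0).card

/-- `𝒪` after `T` requests: the number of pages currently not in `A`'s cache that give
a charge. -/
def Ocount (R : ChargingRun Page) (T : ℕ) : ℕ :=
  (univ.filter fun p => p ∉ R.cacheA T ∧ R.chg T p ≠ none).card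

/-- `𝒟` after `T` requests: the number of times `< T` at which the requested page bore
two charges just before the request. -/
def Dcount (R : ChargingRun Page) (T : ℕ) : ℕ :=
  ((range T).filter fun t => (bearers R t (R.req t)).card = 2).card

/-- `𝒰` after `T` requests: the number of times `< T` at which the requested page was
absent from `OPT`'s cache because `OPT` had previously evicted it, and bore no charge
just before the request. -/
def Ucount (R : ChargingRun Page) (T : ℕ) : ℕ :=
  ((range T).filter fun t =>
    R.req t ∉ R.cacheOpt t ∧ (∃ t' < t, R.evOpt t' = some (R.req t)) ∧
      bearers R t (R.req t) = ∅).card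

/-- `Φ = ℐ − 𝒟 − 𝒪 + 𝒰` after `T` requests (so `Phi R 0 = 0` before the first
request, and `Phi R (t+1)` is the value after the processing of the request at
time `t`). -/
def Phi (R : ChargingRun Page) (T : ℕ) : ℤ :=
  (Icount R T : ℤ) - (Dcount R T : ℤ) - (Ocount R T : ℤ) + (Ucount R T : ℤ)

/-- The condition on the request at time `t`: just before the request, the requested
page is in `OPT`'s cache, is not in `A`'s cache, gives no charge and bears no
charge. -/
def GoodReq (R : ChargingRun Page) (t : ℕ) : Prop :=
  R.req t ∈ R.cacheOpt t ∧ R.req t ∉ R.cacheA t ∧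
    R.chg t (R.req t) = none ∧ ∀ p, R.chg t p ≠ some (R.req t)

/-- The first time strictly after `t` at which page `x` is requested (`⊤` if none). -/
noncomputable def nextReq (R : ChargingRun Page) (t : ℕ) (x : Page) : ℕ∞ :=
  ⨅ m ∈ {m : ℕ | t < m ∧ R.req m = x}, (m : ℕ∞)

/-- `β(t) = 1` iff `A` suffers a miss at time `t`, evicting a page `p`, and the page
`c(p)` assigned to `p` at this eviction is requested, strictly after time `t`, no later
than the first request to `p` after time `t`. -/
def Beta (R : ChargingRun Page) (t : ℕ) : Prop :=
  ∃ p u, R.evA t = some p ∧ R.chg (t + 1) p = some u ∧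
    ∃ m : ℕ, t < m ∧ R.req m = u ∧ (m : ℕ∞) ≤ nextReq R t p

/-- `cost(OPT, T)`: the number of cache misses of `OPT` during the first `T`
requests. -/
def costOpt (R : ChargingRun Page) (T : ℕ) : ℕ :=
  ((range T).filter fun t => R.req t ∉ R.cacheOpt t).card

/-!
Call the charge of `p` to `x` *timely* at time `T` if every request to `p` from `T` on is
preceded (weakly) by a request to `x` from `T` on. The potential is the set `V_T` of pages
outside `A`'s cache giving a timely charge; it is contained in the set counted by `𝒪`, and
`𝒰 = 0` because a page evicted by `OPT` keeps its self-charge until it is requested again.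

A step with `β(t) = 1` adds the page evicted by `A` to `V`. A page leaves `V` at the request
of `s` only if it charges `s`; charge targets lie outside `OPT`'s cache, so this costs `OPT` a
miss, and at most two pages leave, two only when `s` bears two charges, since a page bears at
most one charge from a page other than itself. A page requested for the first time bears no
charge and is an `OPT` miss. So `β + Δℐ − Δ𝒟 − Δ|V| ≤ Δcost` at every step.
-/

namespace CacheStep

variable {α : Type} [DecidableEq α] {s : α} {C C' : Finset α} {ev : Option α}

theorem subset_insert (h : CacheStep s C C' ev) : C' ⊆ insert s C := by
  rcases h with ⟨_, _, rfl⟩ | ⟨_, p, _, _, rfl⟩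
  · exact Finset.subset_insert _ _
  · exact insert_subset_insert s (erase_subset p C)

theorem req_mem (h : CacheStep s C C' ev) : s ∈ C' := by
  rcases h with ⟨hs, _, rfl⟩ | ⟨_, p, _, _, rfl⟩
  · exact hs
  · exact mem_insert_self s _

theorem mem_of_evict (h : CacheStep s C C' ev) {p : α} (hp : ev = some p) : p ∈ C := by
  rcases h with ⟨_, rfl, _⟩ | ⟨_, q, hq, rfl, _⟩
  · cases hp
  · cases hp; exact hq

theorem notMem_of_evict (h : CacheStep s C C' ev) {p : α} (hp : ev = some p) : p ∉ C' := by
  rcases h with ⟨_, rfl, _⟩ | ⟨hs, q, hq, rfl, rfl⟩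
  · cases hp
  · cases hp
    rw [mem_insert, mem_erase]
    rintro (rfl | ⟨hne, _⟩)
    exacts [hs hq, hne rfl]

theorem mem_of_mem (h : CacheStep s C C' ev) {x : α} (hx : x ∈ C) (hev : ev ≠ some x) :
    x ∈ C' := by
  rcases h with ⟨_, _, rfl⟩ | ⟨_, q, _, rfl, rfl⟩
  · exact hx
  · exact mem_insert_of_mem (mem_erase.2 ⟨fun hxq => hev (hxq ▸ rfl), hx⟩)

end CacheStep

section ChargeUpdates

variable {α : Type} [DecidableEq α]

theorem clearStep_eq_some {s p x : α} {c : α → Option α} :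
    clearStep s c p = some x ↔ p ≠ s ∧ x ≠ s ∧ c p = some x := by
  unfold clearStep
  split_ifs <;> grind

theorem optStep_self (p : α) (c : α → Option α) : optStep (some p) c p = some p :=
  Function.update_self p _ c

theorem optStep_of_ne {ev : Option α} {p : α} (hp : ev ≠ some p) (c : α → Option α) :
    optStep ev c p = c p := by
  cases ev with
  | none => rfl
  | some q => exact Function.update_of_ne (by rintro rfl; exact hp rfl) _ c

theorem AStep.apply_of_ne {CA CO : Finset α} {ev : Option α} {c c' : α → Option α}
    (h : AStep CA CO ev c c') {p : α} (hp : ev ≠ some p) : c' p = c p := by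
  cases ev with
  | none => exact congrFun h p
  | some q =>
    rcases h with ⟨_, rfl⟩ | ⟨_, r, _, _, _, rfl⟩ <;>
      exact Function.update_of_ne (by rintro rfl; exact hp rfl) _ c

theorem AStep.apply_self {CA CO : Finset α} {p : α} {c c' : α → Option α}
    (h : AStep CA CO (some p) c c') :
    (p ∉ CO ∧ c' p = some p) ∨
      (p ∈ CO ∧ ∃ q ∈ CA, q ∉ CO ∧ (∀ y ∈ CO, y ∉ CA → c y ≠ some q) ∧ c' p = some q) := by
  rcases h with ⟨hp, rfl⟩ | ⟨hp, q, hq, hqO, hfresh, rfl⟩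
  · exact Or.inl ⟨hp, Function.update_self p _ c⟩
  · exact Or.inr ⟨hp, q, hq, hqO, hfresh, Function.update_self p _ c⟩

end ChargeUpdates

namespace ChargingRun

section Invariants

variable {α : Type} [DecidableEq α] (R : ChargingRun α)

def seen (t : ℕ) : Finset α :=
  R.cacheA 0 ∪ (range t).image R.req

theorem seen_succ (t : ℕ) : R.seen (t + 1) = insert (R.req t) (R.seen t) := by
  rw [seen, seen, range_add_one, image_insert, union_insert]

theorem cacheA_subset_seen : ∀ t, R.cacheA t ⊆ R.seen t
  | 0 => subset_union_left
  | t + 1 => by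
    rw [seen_succ]
    exact (R.stepA t).subset_insert.trans (insert_subset_insert _ (cacheA_subset_seen t))

theorem cacheOpt_subset_seen : ∀ t, R.cacheOpt t ⊆ R.seen t
  | 0 => R.init_eq ▸ subset_union_left
  | t + 1 => by
    rw [seen_succ]
    exact (R.stepOpt t).subset_insert.trans (insert_subset_insert _ (cacheOpt_subset_seen t))

variable {T : ℕ} {p x : α}

theorem chg_succ_of_evOpt (h : R.evOpt T = some p) : R.chg (T + 1) p = some p := by
  obtain ⟨c, -, hc⟩ := R.chg_step T
  rw [hc, h, optStep_self]

theorem chg_succ_of_ne (hO : R.evOpt T ≠ some p) (hA : R.evA T ≠ some p) :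
    R.chg (T + 1) p = clearStep (R.req T) (R.chg T) p := by
  obtain ⟨c, hc₂, hc⟩ := R.chg_step T
  rw [hc, optStep_of_ne hO, hc₂.apply_of_ne hA]

theorem chg_succ_of_evA (hO : R.evOpt T ≠ some p) (hA : R.evA T = some p) :
    (p ∉ R.cacheOpt (T + 1) ∧ R.chg (T + 1) p = some p) ∨
      (p ∈ R.cacheOpt (T + 1) ∧ ∃ q ∈ R.cacheA T, q ∉ R.cacheOpt (T + 1) ∧
        (∀ y ∈ R.cacheOpt (T + 1), y ∉ R.cacheA T →
          clearStep (R.req T) (R.chg T) y ≠ some q) ∧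
        R.chg (T + 1) p = some q) := by
  obtain ⟨c, hc₂, hc⟩ := R.chg_step T
  rw [hA] at hc₂
  rw [hc, optStep_of_ne hO]
  exact hc₂.apply_self

/-- The possible origins of a charge of `p` to `x` held just after the request at time `T`. -/
inductive ChargeOrigin (T : ℕ) : α → α → Prop
  | evictOpt {p : α} : R.evOpt T = some p → ChargeOrigin T p p
  | evictA {p : α} : R.evA T = some p → p ∉ R.cacheOpt (T + 1) → ChargeOrigin T p p
  | transfer {p q : α} : R.evA T = some p → p ∈ R.cacheOpt (T + 1) → q ∈ R.cacheA T →
      q ∉ R.cacheOpt (T + 1) →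
      (∀ y ∈ R.cacheOpt (T + 1), y ∉ R.cacheA T → clearStep (R.req T) (R.chg T) y ≠ some q) →
      ChargeOrigin T p q
  | keep {p x : α} : R.evOpt T ≠ some p → R.evA T ≠ some p → p ≠ R.req T → x ≠ R.req T →
      R.chg T p = some x → ChargeOrigin T p x

theorem chargeOrigin (h : R.chg (T + 1) p = some x) : R.ChargeOrigin T p x := by
  by_cases hO : R.evOpt T = some p
  · rw [R.chg_succ_of_evOpt hO] at h
    cases h
    exact .evictOpt hO
  by_cases hA : R.evA T = some p
  · rcases R.chg_succ_of_evA hO hA with ⟨hp, hc⟩ | ⟨hp, q, hq, hqO, hfresh, hc⟩ <;>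
      rw [hc] at h <;> cases h
    exacts [.evictA hA hp, .transfer hA hp hq hqO hfresh]
  · rw [R.chg_succ_of_ne hO hA, clearStep_eq_some] at h
    exact .keep hO hA h.1 h.2.1 h.2.2

theorem notMem_cacheOpt_of_chg_eq_some : ∀ {t : ℕ} {p x : α},
    R.chg t p = some x → x ∉ R.cacheOpt t
  | 0, p, x, h => by simp [R.chg_init] at h
  | T + 1, p, x, h => by
    cases R.chargeOrigin h with
    | evictOpt hO => exact (R.stepOpt T).notMem_of_evict hO
    | evictA _ hp => exact hp
    | transfer _ _ _ hq _ => exact hq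
    | keep _ _ _ hx hc =>
      intro hmem
      rcases mem_insert.1 ((R.stepOpt T).subset_insert hmem) with rfl | hmem
      exacts [hx rfl, notMem_cacheOpt_of_chg_eq_some hc hmem]

theorem mem_cacheOpt_of_chg_eq_some : ∀ {t : ℕ} {p x : α},
    R.chg t p = some x → p ≠ x → p ∈ R.cacheOpt t
  | 0, p, x, h, _ => by simp [R.chg_init] at h
  | T + 1, p, x, h, hpx => by
    cases R.chargeOrigin h with
    | evictOpt _ | evictA _ _ => exact absurd rfl hpx
    | transfer _ hp _ _ _ => exact hp
    | keep hO _ _ _ hc => exact (R.stepOpt T).mem_of_mem (mem_cacheOpt_of_chg_eq_some hc hpx) hO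

theorem notMem_cacheA_of_chg_eq_some : ∀ {t : ℕ} {p x : α},
    R.chg t p = some x → p ≠ x → p ∉ R.cacheA t
  | 0, p, x, h, _ => by simp [R.chg_init] at h
  | T + 1, p, x, h, hpx => by
    cases R.chargeOrigin h with
    | evictOpt _ | evictA _ _ => exact absurd rfl hpx
    | transfer hA _ _ _ _ => exact (R.stepA T).notMem_of_evict hA
    | keep _ _ hp _ hc =>
      intro hmem
      rcases mem_insert.1 ((R.stepA T).subset_insert hmem) with rfl | hmem
      exacts [hp rfl, notMem_cacheA_of_chg_eq_some hc hpx hmem]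

theorem mem_seen_of_chg_eq_some : ∀ {t : ℕ} {p x : α}, R.chg t p = some x → x ∈ R.seen t
  | 0, p, x, h => by simp [R.chg_init] at h
  | T + 1, p, x, h => by
    rw [seen_succ]
    refine mem_insert_of_mem ?_
    cases R.chargeOrigin h with
    | evictOpt hO => exact R.cacheOpt_subset_seen T ((R.stepOpt T).mem_of_evict hO)
    | evictA hA _ => exact R.cacheA_subset_seen T ((R.stepA T).mem_of_evict hA)
    | transfer _ _ hq _ _ => exact R.cacheA_subset_seen T hq
    | keep _ _ _ _ hc => exact mem_seen_of_chg_eq_some hc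

/-- An older charger of `x` would lie in `OPT⁺ \ A⁻`, which the choice of `x` excludes. -/
theorem eq_of_chg_succ_eq_some_of_evictA {q : α} (h : R.chg (T + 1) q = some x) (hqx : q ≠ x)
    (hA : R.evA T = some p)
    (hfresh : ∀ y ∈ R.cacheOpt (T + 1), y ∉ R.cacheA T →
      clearStep (R.req T) (R.chg T) y ≠ some x) : q = p := by
  cases R.chargeOrigin h with
  | evictOpt _ | evictA _ _ => exact absurd rfl hqx
  | transfer hA' _ _ _ _ => exact Option.some.inj (hA'.symm.trans hA)
  | keep _ _ hq hx hc =>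
    exact absurd (clearStep_eq_some.2 ⟨hq, hx, hc⟩)
      (hfresh q (R.mem_cacheOpt_of_chg_eq_some h hqx) (R.notMem_cacheA_of_chg_eq_some hc hqx))

theorem eq_of_chg_eq_some : ∀ {t : ℕ} {p q x : α}, R.chg t p = some x → R.chg t q = some x →
    p ≠ x → q ≠ x → p = q
  | 0, p, _, x, h, _, _, _ => by simp [R.chg_init] at h
  | T + 1, p, q, x, hp, hq, hpx, hqx => by
    cases R.chargeOrigin hp with
    | evictOpt _ | evictA _ _ => exact absurd rfl hpx
    | transfer hA _ _ _ hfresh => exact (R.eq_of_chg_succ_eq_some_of_evictA hq hqx hA hfresh).symm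
    | keep _ _ _ _ hpc =>
      cases R.chargeOrigin hq with
      | evictOpt _ | evictA _ _ => exact absurd rfl hqx
      | transfer hA _ _ _ hfresh => exact R.eq_of_chg_succ_eq_some_of_evictA hp hpx hA hfresh
      | keep _ _ _ _ hqc => exact eq_of_chg_eq_some hpc hqc hpx hqx

theorem chg_self_of_evictOpt : ∀ {t : ℕ} {p : α}, p ∉ R.cacheOpt t →
    (∃ t' < t, R.evOpt t' = some p) → R.chg t p = some p
  | 0, _, _, ⟨_, h, _⟩ => absurd h (Nat.not_lt_zero _)
  | T + 1, p, hout, ⟨t', ht', hev⟩ => by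
    by_cases hO : R.evOpt T = some p
    · exact R.chg_succ_of_evOpt hO
    have hself : R.chg T p = some p :=
      chg_self_of_evictOpt (fun hp => hout ((R.stepOpt T).mem_of_mem hp hO))
        ⟨t', lt_of_le_of_ne (Nat.lt_succ_iff.1 ht') (by rintro rfl; exact hO hev), hev⟩
    have hps : p ≠ R.req T := fun h => hout (h ▸ (R.stepOpt T).req_mem)
    by_cases hA : R.evA T = some p
    · rcases R.chg_succ_of_evA hO hA with ⟨_, hc⟩ | ⟨hp, _⟩
      exacts [hc, absurd hp hout]
    · rw [R.chg_succ_of_ne hO hA, clearStep_eq_some]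
      exact ⟨hps, hps, hself⟩

end Invariants

section Potential

variable {α : Type} [DecidableEq α] (R : ChargingRun α)

def TimelyCharge (T : ℕ) (p x : α) : Prop :=
  ∀ j, T ≤ j → R.req j = p → ∃ m, T ≤ m ∧ m ≤ j ∧ R.req m = x

variable {R} {T : ℕ} {p x : α}

theorem timelyCharge_self : R.TimelyCharge T p p :=
  fun j hj hjp => ⟨j, hj, le_rfl, hjp⟩

theorem TimelyCharge.succ (h : R.TimelyCharge T p x) (hx : x ≠ R.req T) :
    R.TimelyCharge (T + 1) p x := by
  intro j hj hjp
  obtain ⟨m, hTm, hmj, hmx⟩ := h j (Nat.le_of_succ_le hj) hjp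
  refine ⟨m, Nat.succ_le_of_lt (lt_of_le_of_ne hTm ?_), hmj, hmx⟩
  rintro rfl
  exact hx hmx.symm

theorem TimelyCharge.eq_req (h : R.TimelyCharge T (R.req T) x) : x = R.req T := by
  obtain ⟨m, hTm, hmT, rfl⟩ := h T le_rfl rfl
  rw [le_antisymm hmT hTm]

theorem timelyCharge_of_beta (h : Beta R T) :
    ∃ p u, R.evA T = some p ∧ R.chg (T + 1) p = some u ∧ R.TimelyCharge (T + 1) p u := by
  obtain ⟨p, u, hev, hchg, m, hTm, hmu, hm⟩ := h
  refine ⟨p, u, hev, hchg, fun j hj hjp => ⟨m, hTm, ?_, hmu⟩⟩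
  exact_mod_cast hm.trans (iInf₂_le j ⟨hj, hjp⟩ : nextReq R T p ≤ j)

variable [Fintype α]

variable (R) in
noncomputable def timelyChargers (T : ℕ) : Finset α :=
  univ.filter fun p => p ∉ R.cacheA T ∧ ∃ x, R.chg T p = some x ∧ R.TimelyCharge T p x

variable (R) in
theorem card_timelyChargers_le_Ocount (T : ℕ) : (R.timelyChargers T).card ≤ Ocount R T := by
  refine card_le_card fun p hp => ?_
  obtain ⟨-, hpA, x, hx, -⟩ := mem_filter.1 hp
  exact mem_filter.2 ⟨mem_univ p, hpA, by simp [hx]⟩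

theorem sdiff_timelyChargers_nonempty_of_beta (h : Beta R T) :
    (R.timelyChargers (T + 1) \ R.timelyChargers T).Nonempty := by
  obtain ⟨p, u, hev, hchg, htimely⟩ := timelyCharge_of_beta h
  refine ⟨p, mem_sdiff.2 ⟨?_, fun hp => ?_⟩⟩
  · exact mem_filter.2 ⟨mem_univ p, (R.stepA T).notMem_of_evict hev, u, hchg, htimely⟩
  · exact (mem_filter.1 hp).2.1 ((R.stepA T).mem_of_evict hev)

theorem mem_timelyChargers_succ (hp : p ∈ R.timelyChargers T)
    (hs : p ∉ bearers R T (R.req T)) : p ∈ R.timelyChargers (T + 1) := by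
  obtain ⟨-, hpA, x, hx, htimely⟩ := mem_filter.1 hp
  have hxs : x ≠ R.req T := by
    rintro rfl
    exact hs (mem_filter.2 ⟨mem_univ p, hx⟩)
  have hps : p ≠ R.req T := by
    rintro rfl
    exact hxs htimely.eq_req
  refine mem_filter.2 ⟨mem_univ p, fun hmem => ?_, ?_⟩
  · rcases mem_insert.1 ((R.stepA T).subset_insert hmem) with rfl | hmem
    exacts [hps rfl, hpA hmem]
  by_cases hO : R.evOpt T = some p
  · exact ⟨p, R.chg_succ_of_evOpt hO, timelyCharge_self⟩
  have hA : R.evA T ≠ some p := fun hA => hpA ((R.stepA T).mem_of_evict hA)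
  rw [R.chg_succ_of_ne hO hA]
  exact ⟨x, clearStep_eq_some.2 ⟨hps, hxs, hx⟩, htimely.succ hxs⟩

variable (R) in
theorem timelyChargers_sdiff_subset_bearers (T : ℕ) :
    R.timelyChargers T \ R.timelyChargers (T + 1) ⊆ bearers R T (R.req T) := by
  intro p hp
  obtain ⟨hpV, hpV'⟩ := mem_sdiff.1 hp
  by_contra hs
  exact hpV' (mem_timelyChargers_succ hpV hs)

end Potential

section Counting

variable {α : Type} [DecidableEq α] (R : ChargingRun α)

theorem Icount_eq_card_seen_sdiff (T : ℕ) : Icount R T = (R.seen T \ R.cacheA 0).card := by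
  rw [Icount, seen, union_sdiff_left]

theorem Icount_succ (T : ℕ) :
    Icount R (T + 1) = Icount R T + if R.req T ∈ R.seen T then 0 else 1 := by
  rw [Icount_eq_card_seen_sdiff, Icount_eq_card_seen_sdiff, seen_succ]
  split_ifs with h
  · rw [insert_eq_of_mem h, add_zero]
  · have h0 : R.req T ∉ R.cacheA 0 := fun h0 => h (mem_union_left _ h0)
    rw [insert_sdiff_of_notMem _ h0, card_insert_of_notMem fun h' => h (mem_sdiff.1 h').1]

theorem costOpt_succ (T : ℕ) :
    costOpt R (T + 1) = costOpt R T + if R.req T ∉ R.cacheOpt T then 1 else 0 := by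
  simp only [costOpt, ← Nat.count_eq_card_filter_range, Nat.count_succ]

variable [Fintype α]

theorem Dcount_succ (T : ℕ) : Dcount R (T + 1) =
    Dcount R T + if (bearers R T (R.req T)).card = 2 then 1 else 0 := by
  simp only [Dcount, ← Nat.count_eq_card_filter_range, Nat.count_succ]

theorem card_bearers_le_two (t : ℕ) (x : α) : (bearers R t x).card ≤ 2 := by
  have hothers : ((bearers R t x).erase x).card ≤ 1 := by
    refine card_le_one.2 fun p hp q hq => ?_
    rw [mem_erase, bearers, mem_filter] at hp hq
    exact R.eq_of_chg_eq_some hp.2.2 hq.2.2 hp.1 hq.1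
  have := pred_card_le_card_erase (s := bearers R t x) (a := x)
  omega

theorem notMem_cacheOpt_of_bearers_nonempty {t : ℕ} {x : α} (h : (bearers R t x).Nonempty) :
    x ∉ R.cacheOpt t := by
  obtain ⟨p, hp⟩ := h
  exact R.notMem_cacheOpt_of_chg_eq_some (mem_filter.1 hp).2

theorem bearers_eq_empty_of_notMem_seen {t : ℕ} {x : α} (h : x ∉ R.seen t) :
    bearers R t x = ∅ :=
  filter_eq_empty_iff.2 fun _ _ hp => h (R.mem_seen_of_chg_eq_some hp)

theorem card_bearers_req_add_le (T : ℕ) :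
    (bearers R T (R.req T)).card + (if R.req T ∈ R.seen T then 0 else 1) ≤
      (if R.req T ∉ R.cacheOpt T then 1 else 0) +
        (if (bearers R T (R.req T)).card = 2 then 1 else 0) := by
  by_cases hseen : R.req T ∈ R.seen T
  · rcases (bearers R T (R.req T)).eq_empty_or_nonempty with hB | hB
    · simp [hB, hseen]
    · have := R.card_bearers_le_two T (R.req T)
      rw [if_pos (R.notMem_cacheOpt_of_bearers_nonempty hB)]
      split_ifs <;> omega
  · rw [R.bearers_eq_empty_of_notMem_seen hseen,
      if_pos fun h => hseen (R.cacheOpt_subset_seen T h)]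
    simp [hseen]

theorem card_timelyChargers_add_le (T : ℕ) :
    (R.timelyChargers T).card + (if Beta R T then 1 else 0) +
        (if R.req T ∈ R.seen T then 0 else 1) ≤
      (R.timelyChargers (T + 1)).card + (if R.req T ∉ R.cacheOpt T then 1 else 0) +
        (if (bearers R T (R.req T)).card = 2 then 1 else 0) := by
  set V := R.timelyChargers T
  set V' := R.timelyChargers (T + 1)
  have hgain : (if Beta R T then 1 else 0) ≤ (V' \ V).card := by
    split_ifs with h
    exacts [card_pos.2 (sdiff_timelyChargers_nonempty_of_beta h), Nat.zero_le _]
  have hloss : (V \ V').card ≤ (bearers R T (R.req T)).card :=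
    card_le_card (R.timelyChargers_sdiff_subset_bearers T)
  have hunion : (V \ V').card + V'.card = (V' \ V).card + V.card := by
    rw [card_sdiff_add_card, card_sdiff_add_card, union_comm]
  have := R.card_bearers_req_add_le T
  omega

theorem Ucount_eq_zero (T : ℕ) : Ucount R T = 0 := by
  refine card_eq_zero.2 (filter_eq_empty_iff.2 ?_)
  rintro t - ⟨hout, hev, hbear⟩
  exact eq_empty_iff_forall_notMem.1 hbear (R.req t)
    (mem_filter.2 ⟨mem_univ _, R.chg_self_of_evictOpt hout hev⟩)

theorem sum_beta_add_Icount_sub_Dcount_le (T : ℕ) :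
    (∑ t ∈ range T, if Beta R t then (1 : ℤ) else 0) + Icount R T - Dcount R T ≤
      costOpt R T + (R.timelyChargers T).card := by
  induction T with
  | zero => simp [Icount, Dcount, costOpt]
  | succ T ih =>
    have hstep := R.card_timelyChargers_add_le T
    rw [sum_range_succ, Icount_succ, Dcount_succ, costOpt_succ]
    push_cast
    split_ifs at hstep ⊢ <;> omega

end Counting

end ChargingRun

/-- **Lemma (accounting of `OPT`'s misses).**  Under the updated charging scheme, for
every request sequence, every pair of runs of `A` and `OPT` and every horizon `T`,
`cost(OPT, T) ≥ Σ_{t < T} β(t) + ℐ − 𝒟 − 𝒪 + 𝒰`, the counts being evaluated at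
horizon `T`. -/
theorem costOpt_ge_beta_add_phi (R : ChargingRun Page) (T : ℕ) :
    (∑ t ∈ range T, (if Beta R t then (1 : ℤ) else 0)) + Phi R T ≤ (costOpt R T : ℤ) := by
  have hO : (R.timelyChargers T).card ≤ Ocount R T := R.card_timelyChargers_le_Ocount T
  have := R.sum_beta_add_Icount_sub_Dcount_le T
  rw [Phi, R.Ucount_eq_zero T]
  omega
end
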